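/- arXiv:2411.01762 — 4 statements merged into one kernel-verified Lean document; each statement's English description precedes it below -/
import Mathlib

section
/- Let s be a finite set of cardinality N ≥ 2, let 2 ≤ P ≤ N, and let x : ι → ℝ. Then the sum over all P-element subsets C of s of (∑_{j ∈ C} x_j)² equals (N−1 choose P−1) · ∑_{j ∈ s} x_j² + (N−2 choose P−2) · ((∑_{j ∈ s} x_j)² − ∑_{j ∈ s} x_j²). -/
/-!
Expanding the square, `(∑ j ∈ C, x j) ^ 2 = ∑ i ∈ C, ∑ j ∈ C, x i * x j`, and exchanging the
order of summation, the coefficient of `x i * x j` is the number of `P`-subsets of `s` containing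
both `i` and `j`: this is `(N - 1).choose (P - 1)` on the diagonal `i = j` and
`(N - 2).choose (P - 2)` off it, and the off-diagonal products sum to
`(∑ j ∈ s, x j) ^ 2 - ∑ j ∈ s, x j ^ 2`.
-/

open Finset

section

variable {ι R : Type*} [DecidableEq ι]

theorem sum_mul_sum_eq_sum_card_filter_mem [CommSemiring R] {s : Finset ι}
    (𝒜 : Finset (Finset ι)) (h𝒜 : ∀ C ∈ 𝒜, C ⊆ s) (f g : ι → R) :
    ∑ C ∈ 𝒜, (∑ i ∈ C, f i) * (∑ j ∈ C, g j)
      = ∑ i ∈ s, ∑ j ∈ s, (#{C ∈ 𝒜 | i ∈ C ∧ j ∈ C} : R) * (f i * g j) := by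
  have extend : ∀ C ∈ 𝒜, (∑ i ∈ C, f i) * (∑ j ∈ C, g j)
      = ∑ i ∈ s, ∑ j ∈ s, if i ∈ C ∧ j ∈ C then f i * g j else 0 := fun C hC ↦ by
    simp only [ite_and, sum_ite_irrel, sum_const_zero, sum_ite_mem, inter_eq_right.mpr (h𝒜 C hC),
      sum_mul_sum]
  rw [sum_congr rfl extend, sum_comm]
  refine sum_congr rfl fun i _ ↦ ?_
  rw [sum_comm]
  refine sum_congr rfl fun j _ ↦ ?_
  rw [← sum_filter, sum_const, nsmul_eq_mul]

theorem card_filter_powersetCard_mem_and_mem {s : Finset ι} {i j : ι} (hi : i ∈ s) (hj : j ∈ s)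
    {k : ℕ} (hk : 2 ≤ k) :
    #{C ∈ s.powersetCard k | i ∈ C ∧ j ∈ C}
      = if i = j then (#s - 1).choose (k - 1) else (#s - 2).choose (k - 2) := by
  have mem_and_mem_iff : ∀ C : Finset ι, i ∈ C ∧ j ∈ C ↔ {i, j} ⊆ C := fun C ↦ by
    rw [insert_subset_iff, singleton_subset_iff]
  simp_rw [mem_and_mem_iff]
  split_ifs with hij
  · subst hij
    rw [pair_eq_singleton, card_filter_powersetCard_subset _ _ _ (by simpa) (by simp; omega),
      card_singleton]
  · have hpair : {i, j} ⊆ s := (mem_and_mem_iff s).mp ⟨hi, hj⟩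
    rw [card_filter_powersetCard_subset _ _ _ hpair (by simp [card_pair hij, hk]), card_pair hij]

theorem sum_sum_ite_eq_mul_sum_sq [CommRing R] (s : Finset ι) (a b : R) (x : ι → R) :
    ∑ i ∈ s, ∑ j ∈ s, (if i = j then a else b) * (x i * x j)
      = a * ∑ i ∈ s, x i ^ 2 + b * ((∑ i ∈ s, x i) ^ 2 - ∑ i ∈ s, x i ^ 2) := by
  have split_diagonal : ∀ i j, (if i = j then a else b) * (x i * x j)
      = b * (x i * x j) + if i = j then (a - b) * x i ^ 2 else 0 := by
    intro i j
    split_ifs with h <;> [subst h; skip] <;> ring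
  simp only [split_diagonal, sum_add_distrib, sum_ite_eq, sum_ite_mem, inter_self, ← mul_sum,
    ← sum_mul]
  ring

end

theorem stmt_2_general {ι : Type*} [DecidableEq ι] (s : Finset ι) (N P : ℕ)
    (hN : s.card = N) (hP2 : 2 ≤ P) (x : ι → ℝ) :
    ∑ C ∈ s.powersetCard P, (∑ j ∈ C, x j) ^ 2
      = ((N - 1).choose (P - 1) : ℝ) * ∑ j ∈ s, (x j) ^ 2
        + ((N - 2).choose (P - 2) : ℝ) * ((∑ j ∈ s, x j) ^ 2 - ∑ j ∈ s, (x j) ^ 2) := by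
  subst hN
  calc ∑ C ∈ s.powersetCard P, (∑ j ∈ C, x j) ^ 2
      = ∑ i ∈ s, ∑ j ∈ s, (#{C ∈ s.powersetCard P | i ∈ C ∧ j ∈ C} : ℝ) * (x i * x j) := by
        simp_rw [sq]
        exact sum_mul_sum_eq_sum_card_filter_mem _ (fun C hC ↦ (mem_powersetCard.mp hC).1) x x
    _ = ∑ i ∈ s, ∑ j ∈ s, (if i = j then ((#s - 1).choose (P - 1) : ℝ)
          else ((#s - 2).choose (P - 2) : ℝ)) * (x i * x j) :=
        sum_congr rfl fun i hi ↦ sum_congr rfl fun j hj ↦ by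
          rw [card_filter_powersetCard_mem_and_mem hi hj hP2, Nat.cast_ite]
    _ = _ := sum_sum_ite_eq_mul_sum_sq s _ _ x

/-- Second-moment identity for random batch sums: the sum over all `P`-element subsets
`C` of `s` of `(∑ j ∈ C, x j)^2` equals
`(N-1).choose (P-1) * ∑ j ∈ s, (x j)^2 + (N-2).choose (P-2) * ((∑ j ∈ s, x j)^2 - ∑ j ∈ s, (x j)^2)`. -/
theorem stmt_2 {ι : Type*} [DecidableEq ι] (s : Finset ι) (N P : ℕ)
    (hN : s.card = N) (hN2 : 2 ≤ N) (hP2 : 2 ≤ P) (hPN : P ≤ N) (x : ι → ℝ) :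
    ∑ C ∈ s.powersetCard P, (∑ j ∈ C, x j) ^ 2
      = ((N - 1).choose (P - 1) : ℝ) * ∑ j ∈ s, (x j) ^ 2
        + ((N - 2).choose (P - 2) : ℝ) * ((∑ j ∈ s, x j) ^ 2 - ∑ j ∈ s, (x j) ^ 2) :=
  stmt_2_general s N P hN hP2 x
end

section
/- Let s be a finite set of cardinality N ≥ 2, let 1 ≤ P ≤ N, let x : ι → ℝ, and set x̄ = (1/N)∑_{j ∈ s} x_j. If a subset C is drawn uniformly at random from the P-element subsets of s, then the variance of the scaled batch sum (N/P) · ∑_{j ∈ C} x_j equals (N(N−P)/(P(N−1))) · ∑_{j ∈ s} (x_j − x̄)². -/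
/-!
Write `N = #s` and `M = (N choose P)`. By double counting, a sum over the `P`-subsets `C` of a
sum over `C` (or over `C ×ˢ C`) becomes a sum over `s` (or `s ×ˢ s`) weighted by the number of
`P`-subsets containing a given set `t ⊆ s`, and that number is
`M · P(P-1)⋯(P-#t+1) / (N(N-1)⋯(N-#t+1))`. Hence, for `Y = ∑ j ∈ C, x j`,
`E[Y] = (P/N) ∑ x` and `E[Y²] = (P(P-1)/(N(N-1))) (∑ x)² + (P(N-P)/(N(N-1))) ∑ x²`,
and the variance formula is then an algebraic identity.
-/

open Finset

namespace Finset

theorem sum_sum_eq_sum_card_filter_nsmul {ι κ M : Type*} [DecidableEq κ] [AddCommMonoid M]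
    {S : Finset (Finset ι)} {u : Finset κ} (F : Finset ι → Finset κ) (hF : ∀ C ∈ S, F C ⊆ u)
    (g : κ → M) :
    ∑ C ∈ S, ∑ a ∈ F C, g a = ∑ a ∈ u, #{C ∈ S | a ∈ F C} • g a := by
  rw [sum_comm' (t' := u) (s' := fun a ↦ {C ∈ S | a ∈ F C})]
  · simp only [sum_const]
  · intro C a
    simp only [mem_filter]
    exact ⟨fun h ↦ ⟨h, hF C h.1 h.2⟩, And.left⟩

theorem sum_sum_ite_eq_mul_mul {ι R : Type*} [DecidableEq ι] [CommRing R]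
    (s : Finset ι) (f : ι → R) (a b : R) :
    ∑ i ∈ s, ∑ j ∈ s, (if i = j then a else b) * (f i * f j)
      = b * (∑ i ∈ s, f i) ^ 2 + (a - b) * ∑ i ∈ s, f i ^ 2 := by
  have split (i j : ι) : (if i = j then a else b) * (f i * f j)
      = b * (f i * f j) + if i = j then (a - b) * (f i * f j) else 0 := by
    split_ifs <;> ring
  simp only [split, sum_add_distrib, sum_ite_eq, sum_ite_mem, inter_self, ← mul_sum, sq,
    sum_mul_sum]

theorem sum_sub_mean_sq {ι R : Type*} [Field R] (s : Finset ι) (x : ι → R) :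
    ∑ j ∈ s, (x j - 1 / #s * ∑ k ∈ s, x k) ^ 2 = ∑ j ∈ s, x j ^ 2 - (∑ j ∈ s, x j) ^ 2 / #s := by
  by_cases hs : (#s : R) = 0
  · simp [hs]
  simp_rw [sub_sq, sum_add_distrib, sum_sub_distrib, ← sum_mul, ← mul_sum, sum_const, nsmul_eq_mul]
  field_simp
  ring

variable {ι R : Type*} [DecidableEq ι]

theorem card_filter_powersetCard_subset_mul_descFactorial {s t : Finset ι} (P : ℕ)
    (hts : t ⊆ s) :
    #{C ∈ s.powersetCard P | t ⊆ C} * (#s).descFactorial #t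
      = (#s).choose P * P.descFactorial #t := by
  rcases le_or_gt #t P with htP | hPt
  · rw [card_filter_powersetCard_subset t s P hts htP, Nat.descFactorial_eq_factorial_mul_choose,
      Nat.descFactorial_eq_factorial_mul_choose]
    calc _ = (#t).factorial * ((#s).choose #t * (#s - #t).choose (P - #t)) := by ring
      _ = _ := by rw [← Nat.choose_mul htP]; ring
  · rw [Nat.descFactorial_eq_zero_iff_lt.mpr hPt, mul_zero, mul_eq_zero, card_eq_zero,
      filter_eq_empty_iff]
    refine Or.inl fun C hC htC ↦ ?_
    have := card_le_card htC
    rw [(mem_powersetCard.mp hC).2] at this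
    omega

variable [Field R] [CharZero R]

theorem cast_card_filter_powersetCard_subset {s t : Finset ι} (P : ℕ) (hts : t ⊆ s) :
    (#{C ∈ s.powersetCard P | t ⊆ C} : R)
      = (#s).choose P * P.descFactorial #t / (#s).descFactorial #t := by
  have hpos : ((#s).descFactorial #t : R) ≠ 0 :=
    Nat.cast_ne_zero.mpr (Nat.descFactorial_pos.mpr (card_le_card hts)).ne'
  rw [eq_div_iff hpos]
  exact_mod_cast card_filter_powersetCard_subset_mul_descFactorial P hts

theorem sum_powersetCard_sum (s : Finset ι) (P : ℕ) (x : ι → R) :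
    ∑ C ∈ s.powersetCard P, ∑ j ∈ C, x j = (#s).choose P * (P / #s) * ∑ j ∈ s, x j := by
  rw [sum_sum_eq_sum_card_filter_nsmul (fun C ↦ C) (fun C hC ↦ (mem_powersetCard.mp hC).1),
    mul_sum]
  refine sum_congr rfl fun j hj ↦ ?_
  simp_rw [← singleton_subset_iff, nsmul_eq_mul,
    cast_card_filter_powersetCard_subset P (singleton_subset_iff.mpr hj), card_singleton,
    Nat.descFactorial_one, mul_div_assoc]

theorem sum_powersetCard_sum_sq (s : Finset ι) (P : ℕ) (x : ι → R) :
    ∑ C ∈ s.powersetCard P, (∑ j ∈ C, x j) ^ 2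
      = (#s).choose P * (P * (P - 1) / (#s * (#s - 1)) * (∑ j ∈ s, x j) ^ 2
          + (P / #s - P * (P - 1) / (#s * (#s - 1))) * ∑ j ∈ s, x j ^ 2) := by
  have sq_eq (C : Finset ι) : (∑ j ∈ C, x j) ^ 2 = ∑ p ∈ C ×ˢ C, x p.1 * x p.2 := by
    rw [sq, sum_mul_sum, sum_product]
  have pair_count (i j : ι) (hi : i ∈ s) (hj : j ∈ s) :
      (#{C ∈ s.powersetCard P | (i, j) ∈ C ×ˢ C} : R) = (#s).choose P *
        if i = j then (P / #s : R) else P * (P - 1) / (#s * (#s - 1)) := by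
    simp_rw [mem_product, ← insert_subset_iff.trans (and_congr_right' singleton_subset_iff)]
    rw [cast_card_filter_powersetCard_subset P (insert_subset hi (singleton_subset_iff.mpr hj)),
      mul_div_assoc]
    split_ifs with h
    · subst h; simp
    · rw [card_pair h, Nat.cast_descFactorial_two, Nat.cast_descFactorial_two]
  rw [sum_congr rfl fun C _ ↦ sq_eq C, sum_sum_eq_sum_card_filter_nsmul (fun C ↦ C ×ˢ C)
    (fun C hC ↦ product_subset_product (mem_powersetCard.mp hC).1 (mem_powersetCard.mp hC).1),
    sum_product]
  simp_rw +contextual [nsmul_eq_mul, pair_count, mul_assoc, ← mul_sum]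
  rw [sum_sum_ite_eq_mul_mul]

end Finset

/-- Exact variance of the random batch estimator: with `C` drawn uniformly at random
from the `P`-element subsets of `s` (so expectation is the average over
`s.powersetCard P`), the variance `E[Y²] - (E[Y])²` of `Y = (N/P) ∑ j ∈ C, x j`
equals `(N(N-P)/(P(N-1))) ∑ j ∈ s, (x j - x̄)²` where `x̄ = (1/N) ∑ j ∈ s, x j`. -/
theorem stmt_3 {ι : Type*} [DecidableEq ι] (s : Finset ι) (N P : ℕ)
    (hN : s.card = N) (hN2 : 2 ≤ N) (hP1 : 1 ≤ P) (hPN : P ≤ N) (x : ι → ℝ) :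
    ((s.powersetCard P).card : ℝ)⁻¹
        * ∑ C ∈ s.powersetCard P, (((N : ℝ) / (P : ℝ)) * ∑ j ∈ C, x j) ^ 2
      - (((s.powersetCard P).card : ℝ)⁻¹
          * ∑ C ∈ s.powersetCard P, ((N : ℝ) / (P : ℝ)) * ∑ j ∈ C, x j) ^ 2
      = ((N : ℝ) * ((N : ℝ) - (P : ℝ)) / ((P : ℝ) * ((N : ℝ) - 1)))
          * ∑ j ∈ s, (x j - (1 / (N : ℝ)) * ∑ k ∈ s, x k) ^ 2 := by
  subst hN
  have hs : (#s : ℝ) ≠ 0 := Nat.cast_ne_zero.mpr (by omega)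
  have hs1 : (#s : ℝ) - 1 ≠ 0 := by
    rw [sub_ne_zero]; exact_mod_cast (by omega : #s ≠ 1)
  have hP : (P : ℝ) ≠ 0 := Nat.cast_ne_zero.mpr (by omega)
  have hM : ((#s).choose P : ℝ) ≠ 0 := Nat.cast_ne_zero.mpr (Nat.choose_pos hPN).ne'
  simp_rw [card_powersetCard, mul_pow, ← mul_sum, sum_powersetCard_sum, sum_powersetCard_sum_sq,
    sum_sub_mean_sq]
  field_simp
  ring
end

section
/- Let s be a finite set of cardinality N ≥ 2, let 1 ≤ P ≤ N, let x : ι → ℝ, and suppose |x_j| ≤ M for all j ∈ s. If a subset C is drawn uniformly at random from the P-element subsets of s, then the variance of the scaled batch sum (N/P) · ∑_{j ∈ C} x_j is at most N²(N−P)M²/(P(N−1)). In particular the variance of the random batch estimator is bounded whenever the individual contributions are bounded. -/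
open Finset

lemma filter_mem_powersetCard {α : Type*} [DecidableEq α] (s : Finset α) (j : α) (hj : j ∈ s)
    (n : ℕ) :
    (s.powersetCard (n+1)).filter (fun C => j ∈ C) =
      ((s.erase j).powersetCard n).image (insert j) := by
  ext C
  simp only [mem_filter, mem_powersetCard, mem_image]
  constructor
  · rintro ⟨⟨hsub, hcard⟩, hjC⟩
    refine ⟨C.erase j, ⟨erase_subset_erase _ hsub, ?_⟩, insert_erase hjC⟩
    rw [card_erase_of_mem hjC, hcard]; rfl
  · rintro ⟨D, ⟨hsub, hcard⟩, rfl⟩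
    have hjD : j ∉ D := fun h => notMem_erase j s (hsub h)
    exact ⟨⟨insert_subset hj (hsub.trans (erase_subset _ _)),
      by rw [card_insert_of_notMem hjD, hcard]⟩, mem_insert_self _ _⟩

lemma insert_injOn_powersetCard {α : Type*} [DecidableEq α] (s : Finset α) (j : α) (n : ℕ) :
    Set.InjOn (insert j) ((s.erase j).powersetCard n : Set (Finset α)) := by
  intro C hC D hD h
  simp only [mem_coe, mem_powersetCard] at hC hD
  have hjC : j ∉ C := fun hx => notMem_erase j s (hC.1 hx)
  have hjD : j ∉ D := fun hx => notMem_erase j s (hD.1 hx)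
  rw [← erase_insert hjC, h, erase_insert hjD]

lemma card_filter_mem_powersetCard {α : Type*} [DecidableEq α] (s : Finset α) (j : α)
    (hj : j ∈ s) (n : ℕ) :
    ((s.powersetCard (n+1)).filter (fun C => j ∈ C)).card = (s.card - 1).choose n := by
  rw [filter_mem_powersetCard s j hj n,
    card_image_of_injOn (insert_injOn_powersetCard s j n), card_powersetCard,
    card_erase_of_mem hj]

lemma card_filter_pair_powersetCard {α : Type*} [DecidableEq α] (s : Finset α) (i j : α)
    (hj : j ∈ s) (hij : i ≠ j) (n : ℕ) :
    ((s.powersetCard (n+1)).filter (fun C => i ∈ C ∧ j ∈ C)).card =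
      (((s.erase j).powersetCard n).filter (fun C => i ∈ C)).card := by
  have h1 : (s.powersetCard (n+1)).filter (fun C => i ∈ C ∧ j ∈ C) =
      ((s.powersetCard (n+1)).filter (fun C => j ∈ C)).filter (fun C => i ∈ C) := by
    rw [filter_filter]
    apply filter_congr
    intro C _
    simp [and_comm]
  rw [h1, filter_mem_powersetCard s j hj n, filter_image]
  have h2 : ∀ C ∈ (s.erase j).powersetCard n, (i ∈ insert j C ↔ i ∈ C) := by
    intro C _
    simp [mem_insert, hij]
  rw [filter_congr h2]
  exact card_image_of_injOn ((insert_injOn_powersetCard s j n).mono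
    (by exact_mod_cast filter_subset _ _))

lemma pair_count_eq {α : Type*} [DecidableEq α] (s : Finset α) (i j : α)
    (hi : i ∈ s) (hj : j ∈ s) (hij : i ≠ j) (P : ℕ) (hP : 1 ≤ P) :
    ((s.powersetCard P).filter (fun C => i ∈ C ∧ j ∈ C)).card =
      if P = 1 then 0 else (s.card - 2).choose (P - 2) := by
  obtain ⟨m, rfl⟩ : ∃ m, P = m + 1 := ⟨P - 1, (Nat.succ_pred_eq_of_pos hP).symm⟩
  rw [card_filter_pair_powersetCard s i j hj hij m]
  cases m with
  | zero =>
    simp [powersetCard_zero, filter_singleton]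
  | succ k =>
    have hi' : i ∈ s.erase j := mem_erase.mpr ⟨hij, hi⟩
    rw [card_filter_mem_powersetCard (s.erase j) i hi' k, card_erase_of_mem hj,
      Nat.sub_sub]
    simp

set_option maxHeartbeats 1000000 in
/-- Bounded variance of the random batch estimator: if `|x j| ≤ M` for all `j ∈ s`, then
the variance `E[Y²] - (E[Y])²` of `Y = (N/P) ∑ j ∈ C, x j`, with `C` drawn uniformly at
random from the `P`-element subsets of `s`, is at most `N²(N-P)M²/(P(N-1))`. -/
theorem stmt_4 {ι : Type*} [DecidableEq ι] (s : Finset ι) (N P : ℕ)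
    (hN : s.card = N) (hN2 : 2 ≤ N) (hP1 : 1 ≤ P) (hPN : P ≤ N) (x : ι → ℝ)
    (M : ℝ) (hM : ∀ j ∈ s, |x j| ≤ M) :
    ((s.powersetCard P).card : ℝ)⁻¹
        * ∑ C ∈ s.powersetCard P, (((N : ℝ) / (P : ℝ)) * ∑ j ∈ C, x j) ^ 2
      - (((s.powersetCard P).card : ℝ)⁻¹
          * ∑ C ∈ s.powersetCard P, ((N : ℝ) / (P : ℝ)) * ∑ j ∈ C, x j) ^ 2
      ≤ (N : ℝ) ^ 2 * ((N : ℝ) - (P : ℝ)) * M ^ 2 / ((P : ℝ) * ((N : ℝ) - 1)) := by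
  classical
  set T : ℕ := (s.powersetCard P).card with hTdef
  set A : ℕ := (N - 1).choose (P - 1) with hAdef
  set B : ℕ := if P = 1 then 0 else (N - 2).choose (P - 2) with hBdef
  set Q : ℝ := ∑ j ∈ s, x j with hQdef
  set R : ℝ := ∑ j ∈ s, (x j) ^ 2 with hRdef
  have hT : T = N.choose P := by rw [hTdef, card_powersetCard, hN]
  have hTpos : 0 < T := by rw [hT]; exact Nat.choose_pos hPN
  -- single-element count
  have hcount1 : ∀ j ∈ s, ((s.powersetCard P).filter (fun C => j ∈ C)).card = A := by
    intro j hj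
    obtain ⟨m, rfl⟩ : ∃ m, P = m + 1 := ⟨P - 1, (Nat.succ_pred_eq_of_pos hP1).symm⟩
    rw [card_filter_mem_powersetCard s j hj m, hN, hAdef]
    rfl
  -- pair count
  have hcount2 : ∀ i ∈ s, ∀ j ∈ s, i ≠ j →
      ((s.powersetCard P).filter (fun C => i ∈ C ∧ j ∈ C)).card = B := by
    intro i hi j hj hij
    rw [pair_count_eq s i j hi hj hij P hP1, hN, hBdef]
  -- Nat identities
  have hNA : N * A = P * T := by
    obtain ⟨K, rfl⟩ : ∃ K, N = K + 1 := ⟨N - 1, (Nat.succ_pred_eq_of_pos (by omega)).symm⟩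
    obtain ⟨m, rfl⟩ : ∃ m, P = m + 1 := ⟨P - 1, (Nat.succ_pred_eq_of_pos hP1).symm⟩
    rw [hT, hAdef]
    simpa [Nat.mul_comm] using Nat.add_one_mul_choose_eq K m
  have hNB : (N - 1) * B = (P - 1) * A := by
    obtain ⟨m, rfl⟩ : ∃ m, P = m + 1 := ⟨P - 1, (Nat.succ_pred_eq_of_pos hP1).symm⟩
    cases m with
    | zero => simp [hBdef]
    | succ k =>
      obtain ⟨K, rfl⟩ : ∃ K, N = K + 2 := ⟨N - 2, by omega⟩
      rw [hBdef, hAdef, if_neg (by omega : ¬ (k + 1 + 1 = 1))]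
      show (K + 1) * K.choose k = (k + 1) * (K + 1).choose (k + 1)
      simpa [Nat.mul_comm] using Nat.add_one_mul_choose_eq K k
  -- expanding sums over subsets
  have key : ∀ C ∈ s.powersetCard P, ∑ k ∈ C, x k = ∑ k ∈ s, if k ∈ C then x k else 0 := by
    intro C hC
    rw [sum_ite_mem, inter_eq_right.mpr (mem_powersetCard.mp hC).1]
  have hS1 : ∑ C ∈ s.powersetCard P, ∑ j ∈ C, x j = (A : ℝ) * Q := by
    rw [sum_congr rfl key, sum_comm]
    rw [hQdef, mul_sum]
    apply sum_congr rfl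
    intro k hk
    rw [← sum_filter, sum_const, hcount1 k hk, nsmul_eq_mul]
  have hS2 : ∑ C ∈ s.powersetCard P, (∑ j ∈ C, x j) ^ 2
      = (A : ℝ) * R + (B : ℝ) * (Q ^ 2 - R) := by
    have expand : ∀ C ∈ s.powersetCard P, (∑ j ∈ C, x j) ^ 2
        = ∑ a ∈ s, ∑ b ∈ s, (if a ∈ C ∧ b ∈ C then x a * x b else 0) := by
      intro C hC
      rw [key C hC, sq, sum_mul_sum]
      apply sum_congr rfl; intro a _
      apply sum_congr rfl; intro b _
      by_cases ha : a ∈ C <;> by_cases hb : b ∈ C <;> simp [ha, hb]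
    rw [sum_congr rfl expand, sum_comm]
    have inner : ∀ a ∈ s, ∑ C ∈ s.powersetCard P, ∑ b ∈ s,
        (if a ∈ C ∧ b ∈ C then x a * x b else 0)
        = (A : ℝ) * (x a) ^ 2 + (B : ℝ) * (x a * (Q - x a)) := by
      intro a ha
      rw [sum_comm]
      have diag : ∑ C ∈ s.powersetCard P, (if a ∈ C ∧ a ∈ C then x a * x a else 0)
          = (A : ℝ) * (x a) ^ 2 := by
        simp only [and_self]
        rw [← sum_filter, sum_const, hcount1 a ha, nsmul_eq_mul, sq]
      have offdiag : ∀ b ∈ s.erase a,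
          ∑ C ∈ s.powersetCard P, (if a ∈ C ∧ b ∈ C then x a * x b else 0)
          = (B : ℝ) * (x a * x b) := by
        intro b hb
        obtain ⟨hba, hbs⟩ := mem_erase.mp hb
        rw [← sum_filter, sum_const, hcount2 a ha b hbs (Ne.symm hba), nsmul_eq_mul]
      rw [← add_sum_erase _ _ ha, diag, sum_congr rfl offdiag, ← mul_sum, ← mul_sum,
        sum_erase_eq_sub ha, ← hQdef]
    rw [sum_congr rfl inner, sum_add_distrib, ← mul_sum, ← mul_sum, ← hRdef]
    congr 1
    have hsplit : ∀ a ∈ s, x a * (Q - x a) = x a * Q - x a ^ 2 := by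
      intro a _; ring
    rw [sum_congr rfl hsplit, sum_sub_distrib, ← sum_mul, ← hQdef, ← hRdef, sq]
  -- final algebra
  have hQ2 : Q ^ 2 ≤ (N : ℝ) * R := by
    have h := sq_sum_le_card_mul_sum_sq (s := s) (f := x)
    rw [hN] at h
    exact_mod_cast h
  have hsne : s.Nonempty := card_pos.mp (by omega)
  obtain ⟨j0, hj0⟩ := hsne
  have hM0 : 0 ≤ M := le_trans (abs_nonneg _) (hM j0 hj0)
  have hRle : R ≤ (N : ℝ) * M ^ 2 := by
    have h : ∀ j ∈ s, x j ^ 2 ≤ M ^ 2 := by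
      intro j hj
      rw [← sq_abs]
      exact pow_le_pow_left₀ (abs_nonneg _) (hM j hj) 2
    calc R ≤ ∑ _j ∈ s, M ^ 2 := sum_le_sum h
      _ = (N : ℝ) * M ^ 2 := by rw [sum_const, hN, nsmul_eq_mul]
  have hR0 : 0 ≤ R := sum_nonneg fun i _ => sq_nonneg _
  have hrw1 : ∑ C ∈ s.powersetCard P, (((N : ℝ) / (P : ℝ)) * ∑ j ∈ C, x j) ^ 2
      = ((N : ℝ) / P) ^ 2 * ((A : ℝ) * R + (B : ℝ) * (Q ^ 2 - R)) := by
    simp_rw [mul_pow]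
    rw [← mul_sum, hS2]
  have hrw2 : ∑ C ∈ s.powersetCard P, ((N : ℝ) / (P : ℝ)) * ∑ j ∈ C, x j
      = ((N : ℝ) / P) * ((A : ℝ) * Q) := by
    rw [← mul_sum, hS1]
  rw [hrw1, hrw2]
  have hPpos : (0 : ℝ) < P := by exact_mod_cast hP1
  have hNpos : (0 : ℝ) < N := by positivity
  have hN1pos : (0 : ℝ) < (N : ℝ) - 1 := by
    have : (2 : ℝ) ≤ N := by exact_mod_cast hN2
    linarith
  have hTposR : (0 : ℝ) < T := by exact_mod_cast hTpos
  have hAr : (N : ℝ) * A = P * T := by exact_mod_cast hNA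
  have hBr : ((N : ℝ) - 1) * B = ((P : ℝ) - 1) * A := by
    have h := congrArg (Nat.cast : ℕ → ℝ) hNB
    push_cast [Nat.cast_sub (show 1 ≤ N by omega), Nat.cast_sub hP1] at h
    exact h
  have hA' : (A : ℝ) = P * T / N := by
    field_simp
    linarith [hAr]
  have hB' : (B : ℝ) = ((P : ℝ) - 1) * A / ((N : ℝ) - 1) := by
    field_simp
    linarith [hBr]
  have heq : (T : ℝ)⁻¹ * (((N : ℝ) / P) ^ 2 * ((A : ℝ) * R + (B : ℝ) * (Q ^ 2 - R)))
      - ((T : ℝ)⁻¹ * (((N : ℝ) / P) * ((A : ℝ) * Q))) ^ 2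
      = (((N : ℝ) - P) / ((P : ℝ) * ((N : ℝ) - 1))) * ((N : ℝ) * R - Q ^ 2) := by
    rw [hB', hA']
    field_simp
    ring
  rw [heq]
  have hPN' : (P : ℝ) ≤ N := by exact_mod_cast hPN
  have hc : 0 ≤ ((N : ℝ) - P) / ((P : ℝ) * ((N : ℝ) - 1)) :=
    div_nonneg (by linarith) (by positivity)
  calc (((N : ℝ) - P) / ((P : ℝ) * ((N : ℝ) - 1))) * ((N : ℝ) * R - Q ^ 2)
      ≤ (((N : ℝ) - P) / ((P : ℝ) * ((N : ℝ) - 1))) * ((N : ℝ) * ((N : ℝ) * M ^ 2)) := by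
        apply mul_le_mul_of_nonneg_left _ hc
        nlinarith [sq_nonneg Q]
    _ = (N : ℝ) ^ 2 * ((N : ℝ) - (P : ℝ)) * M ^ 2 / ((P : ℝ) * ((N : ℝ) - 1)) := by
        field_simp
end

section
/- Let s be a finite set of cardinality N ≥ 2, let 1 ≤ P ≤ N, let x : ι → E take values in a real inner product space E, and set x̄ = (1/N)∑_{j ∈ s} x_j. If a subset C is drawn uniformly at random from the P-element subsets of s, then the expectation of ‖(N/P)∑_{j ∈ C} x_j − ∑_{j ∈ s} x_j‖² equals (N(N−P)/(P(N−1))) · ∑_{j ∈ s} ‖x_j − x̄‖². -/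
/-!
Centre the data: with `y j = x j - x̄` we have `∑ j ∈ s, y j = 0`, and the error of the estimator
is `(N/P) • ∑ j ∈ C, y j`. Since the centred values sum to zero, `∑ j ∈ C, y j = -∑ j ∈ s \ C, y j`,
so `‖∑ j ∈ C, y j‖²` is minus the sum of `⟪y i, y j⟫` over pairs `i ∈ C`, `j ∉ C`. Summing over
all `C`, each ordered pair `i ≠ j` is counted by the `choose (N - 2) (P - 1)` sets containing `i`
but not `j`, and the off-diagonal inner products add up to `-∑ j, ‖y j‖²`. The constant follows
from `choose (N - 2) (P - 1) / choose N P = P (N - P) / (N (N - 1))`.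
-/

open Finset

namespace Finset
variable {α : Type*} [DecidableEq α]

lemma card_filter_mem_notMem_powersetCard_succ {s : Finset α} {i j : α} (hi : i ∈ s) (hj : j ∈ s)
    (hij : i ≠ j) (k : ℕ) :
    #{C ∈ s.powersetCard (k + 1) | i ∈ C ∧ j ∉ C} = (#s - 2).choose k := by
  have hcard : #((s.erase i).erase j) = #s - 2 := by
    rw [card_erase_of_mem (mem_erase.2 ⟨hij.symm, hj⟩), card_erase_of_mem hi]; rfl
  rw [← hcard, ← card_powersetCard]
  refine card_nbij' (fun C => C.erase i) (insert i) ?_ ?_ ?_ ?_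
  · rintro C hC
    simp only [mem_coe, mem_filter, mem_powersetCard] at hC ⊢
    obtain ⟨⟨hCs, hCk⟩, hiC, hjC⟩ := hC
    refine ⟨fun a ha => ?_, by rw [card_erase_of_mem hiC, hCk]; rfl⟩
    simp only [mem_erase] at ha ⊢
    exact ⟨fun h => hjC (h ▸ ha.2), ha.1, hCs ha.2⟩
  · rintro D hD
    simp only [mem_coe, mem_filter, mem_powersetCard, subset_erase] at hD ⊢
    obtain ⟨⟨⟨hDs, hiD⟩, hjD⟩, hDk⟩ := hD
    refine ⟨⟨insert_subset hi hDs, by rw [card_insert_of_notMem hiD, hDk]⟩,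
      mem_insert_self _ _, ?_⟩
    simp only [mem_insert, not_or]
    exact ⟨hij.symm, hjD⟩
  · rintro C hC
    simp only [mem_coe, mem_filter] at hC
    exact insert_erase hC.2.1
  · rintro D hD
    simp only [mem_coe, mem_powersetCard, subset_erase] at hD
    exact erase_insert hD.1.1.2

lemma sum_powersetCard_sum_sum_sdiff {M : Type*} [AddCommMonoid M] (s : Finset α) (k : ℕ)
    (f : α → α → M) :
    ∑ C ∈ s.powersetCard k, ∑ i ∈ C, ∑ j ∈ s \ C, f i j
      = ∑ i ∈ s, ∑ j ∈ s, #{C ∈ s.powersetCard k | i ∈ C ∧ j ∉ C} • f i j := by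
  simp_rw [← sum_product', ← sum_const]
  refine sum_comm' fun C p => ?_
  simp only [mem_product, mem_sdiff, mem_filter, mem_powersetCard]
  constructor
  · rintro ⟨⟨hCs, hCk⟩, hp₁, hp₂, hp₂C⟩
    exact ⟨⟨⟨hCs, hCk⟩, hp₁, hp₂C⟩, hCs hp₁, hp₂⟩
  · rintro ⟨⟨⟨hCs, hCk⟩, hp₁, hp₂C⟩, -, hp₂⟩
    exact ⟨⟨hCs, hCk⟩, hp₁, hp₂, hp₂C⟩

end Finset

lemma Nat.add_two_mul_add_one_mul_choose (n k : ℕ) :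
    (n + 2) * (n + 1) * n.choose k = (k + 1) * (n + 1 - k) * (n + 2).choose (k + 1) := by
  have h := Nat.add_one_mul_choose_eq (n + 1) k
  rw [mul_assoc, mul_comm (n + 1), Nat.choose_mul_succ_eq, ← mul_assoc, h]
  ring

open RealInnerProductSpace

section

variable {α E : Type*} [NormedAddCommGroup E] [InnerProductSpace ℝ E]

lemma sum_sub_inv_card_smul_sum_eq_zero {s : Finset α} (hs : s.Nonempty) (x : α → E) :
    ∑ i ∈ s, (x i - (#s : ℝ)⁻¹ • ∑ j ∈ s, x j) = 0 := by
  rw [sum_sub_distrib, sum_const, ← Nat.cast_smul_eq_nsmul ℝ, smul_smul,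
    mul_inv_cancel₀ (by exact_mod_cast hs.card_ne_zero), one_smul, sub_self]

variable [DecidableEq α]

lemma norm_sum_sq_eq_neg_sum_inner_sdiff {s C : Finset α} {y : α → E} (hy : ∑ i ∈ s, y i = 0)
    (hC : C ⊆ s) : ‖∑ i ∈ C, y i‖ ^ 2 = -∑ i ∈ C, ∑ j ∈ s \ C, ⟪y i, y j⟫ := by
  have hcompl : ∑ j ∈ s \ C, y j = -∑ i ∈ C, y i := by
    rw [eq_neg_iff_add_eq_zero, sum_sdiff hC, hy]
  simp_rw [← inner_sum, ← sum_inner, hcompl, inner_neg_right, real_inner_self_eq_norm_sq, neg_neg]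

lemma sum_sum_erase_inner_eq_neg {s : Finset α} {y : α → E} (hy : ∑ i ∈ s, y i = 0) :
    ∑ i ∈ s, ∑ j ∈ s.erase i, ⟪y i, y j⟫ = -∑ i ∈ s, ‖y i‖ ^ 2 := by
  rw [← sum_neg_distrib]
  refine sum_congr rfl fun i hi => ?_
  rw [sum_erase_eq_sub hi, ← inner_sum, hy, inner_zero_right, real_inner_self_eq_norm_sq, zero_sub]

lemma sum_powersetCard_norm_sum_sq {s : Finset α} {y : α → E} (hy : ∑ i ∈ s, y i = 0) (k : ℕ) :
    ∑ C ∈ s.powersetCard (k + 1), ‖∑ i ∈ C, y i‖ ^ 2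
      = (#s - 2).choose k * ∑ i ∈ s, ‖y i‖ ^ 2 := by
  have hcount : ∀ i ∈ s, ∑ j ∈ s, #{C ∈ s.powersetCard (k + 1) | i ∈ C ∧ j ∉ C} • ⟪y i, y j⟫
      = (#s - 2).choose k * ∑ j ∈ s.erase i, ⟪y i, y j⟫ := by
    intro i hi
    rw [← sum_erase s (a := i) (by simp), mul_sum]
    refine sum_congr rfl fun j hj => ?_
    rw [card_filter_mem_notMem_powersetCard_succ hi (mem_of_mem_erase hj)
      (ne_of_mem_erase hj).symm, nsmul_eq_mul]
  calc ∑ C ∈ s.powersetCard (k + 1), ‖∑ i ∈ C, y i‖ ^ 2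
      = -∑ C ∈ s.powersetCard (k + 1), ∑ i ∈ C, ∑ j ∈ s \ C, ⟪y i, y j⟫ := by
        rw [← sum_neg_distrib]
        exact sum_congr rfl fun C hC =>
          norm_sum_sq_eq_neg_sum_inner_sdiff hy (mem_powersetCard.1 hC).1
    _ = (#s - 2).choose k * ∑ i ∈ s, ‖y i‖ ^ 2 := by
        rw [sum_powersetCard_sum_sum_sdiff, sum_congr rfl hcount, ← mul_sum,
          sum_sum_erase_inner_eq_neg hy, mul_neg, neg_neg]

end

/-- Vector-valued mean squared error of the random batch estimator: for `x` valued in a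
real inner product space `E`, with `C` drawn uniformly at random from the `P`-element
subsets of `s`, the expectation of `‖(N/P) • ∑ j ∈ C, x j - ∑ j ∈ s, x j‖²` equals
`(N(N-P)/(P(N-1))) ∑ j ∈ s, ‖x j - x̄‖²` where `x̄ = (1/N) • ∑ j ∈ s, x j`. -/
theorem stmt_6 {ι : Type*} [DecidableEq ι] {E : Type*}
    [NormedAddCommGroup E] [InnerProductSpace ℝ E]
    (s : Finset ι) (N P : ℕ)
    (hN : s.card = N) (hN2 : 2 ≤ N) (hP1 : 1 ≤ P) (hPN : P ≤ N) (x : ι → E) :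
    ((s.powersetCard P).card : ℝ)⁻¹
        * ∑ C ∈ s.powersetCard P,
            ‖((N : ℝ) / (P : ℝ)) • (∑ j ∈ C, x j) - ∑ j ∈ s, x j‖ ^ 2
      = ((N : ℝ) * ((N : ℝ) - (P : ℝ)) / ((P : ℝ) * ((N : ℝ) - 1)))
          * ∑ j ∈ s, ‖x j - ((N : ℝ))⁻¹ • (∑ k ∈ s, x k)‖ ^ 2 := by
  obtain ⟨n, rfl⟩ : ∃ n, N = n + 2 := ⟨N - 2, by omega⟩
  obtain ⟨k, rfl⟩ : ∃ k, P = k + 1 := ⟨P - 1, by omega⟩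
  set μ : E := ((n + 2 : ℕ) : ℝ)⁻¹ • ∑ j ∈ s, x j
  have hmean : ∑ j ∈ s, x j = ((n + 2 : ℕ) : ℝ) • μ := by
    rw [smul_smul, mul_inv_cancel₀ (by positivity), one_smul]
  have hcentered : ∑ j ∈ s, (x j - μ) = 0 := by
    have hs : s.Nonempty := card_pos.1 (by omega)
    simpa only [hN] using sum_sub_inv_card_smul_sum_eq_zero hs x
  have hbatch : ∀ C ∈ s.powersetCard (k + 1),
      ‖(((n + 2 : ℕ) : ℝ) / ((k + 1 : ℕ) : ℝ)) • ∑ j ∈ C, x j - ∑ j ∈ s, x j‖ ^ 2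
        = (((n + 2 : ℕ) : ℝ) / ((k + 1 : ℕ) : ℝ)) ^ 2 * ‖∑ j ∈ C, (x j - μ)‖ ^ 2 := by
    intro C hC
    rw [← sq_abs (_ / _), ← Real.norm_eq_abs, ← mul_pow, ← norm_smul, sum_sub_distrib,
      sum_const, (mem_powersetCard.1 hC).2, ← Nat.cast_smul_eq_nsmul ℝ, smul_sub, smul_smul,
      div_mul_cancel₀ _ (by positivity), ← hmean]
  have hchoose : ((n + 2 : ℕ) : ℝ) * (n + 1) * n.choose k
      = (k + 1) * ((n + 1 - k : ℕ) : ℝ) * (n + 2).choose (k + 1) := by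
    exact_mod_cast Nat.add_two_mul_add_one_mul_choose n k
  rw [Nat.cast_sub (by omega)] at hchoose
  rw [sum_congr rfl hbatch, ← mul_sum, sum_powersetCard_norm_sum_sq hcentered, hN,
    card_powersetCard, hN]
  have hchoose_pos : ((n + 2).choose (k + 1) : ℝ) ≠ 0 := by
    exact_mod_cast (Nat.choose_pos hPN).ne'
  push_cast at hchoose ⊢
  field_simp
  rw [eq_div_iff (by linarith)]
  linear_combination (∑ j ∈ s, ‖x j - μ‖ ^ 2) * hchoose
end
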